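/- If v ∈ {a,b}^n and v' is obtained from v as in the swap construction (exchanging an all-a's block on the xa-interval with an all-b's block on the xb-interval of equal LCP-interval content), then for every index i ∈ [0..n): if Ψ_v(i) lies outside the x-interval [i_x..j_x), then Ψ_{v'}(i) = Ψ_v(i); otherwise Ψ_{v'}(i) = Ψ_v(i) + n_{xa} or Ψ_{v'}(i) = Ψ_v(i) − n_{xa}, and in either case Ψ_{v'}(i) still lies in [i_x..j_x). -/
import Mathlib


set_option linter.unusedSectionVars false

set_option linter.unusedSectionVars false

namespace SILA

variable {α : Type*} [LinearOrder α]

def lexLE (f g : ℕ → α) : Prop :=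
  f = g ∨ ∃ k, (∀ m < k, f m = g m) ∧ f k < g k

noncomputable def lcpInf (f g : ℕ → α) : ℕ∞ :=
  sSup {m : ℕ∞ | ∀ k : ℕ, (k : ℕ∞) < m → f k = g k}

def IsPrefix (x : List α) (f : ℕ → α) : Prop :=
  ∀ m : Fin x.length, f m.val = x.get m

/-- The standard permutation of `v`: the stable-sort permutation. -/
noncomputable def stdPerm {n : ℕ} (v : Fin n → α) : Equiv.Perm (Fin n) := Tuple.sort v

/-- The cyclic suffix of `IBWT v` corresponding to rank `r` of the suffix array
(Lemma: `W_{SA[r]} = v̂[r]·v̂[Ψ r]·v̂[Ψ² r]⋯` with `v̂ = v ∘ Ψ`). -/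
noncomputable def ibwtSuffix {n : ℕ} (v : Fin n → α) (r : Fin n) : ℕ → α :=
  fun k => v ((stdPerm v ^ (k + 1)) r)

/-- The LCP array of the cyclic suffix array of `IBWT v`. -/
noncomputable def ibwtLCP {n : ℕ} (v : Fin n → α) (r : ℕ) : ℕ∞ :=
  if h : 0 < r ∧ r < n then
    lcpInf (ibwtSuffix v ⟨r - 1, by omega⟩) (ibwtSuffix v ⟨r, h.2⟩)
  else 0

/-- `[i..j)` is the x-interval of the cyclic suffix array of `IBWT v`. -/
def IsXIntervalIBWT {n : ℕ} (v : Fin n → α) (x : List α) (i j : ℕ) : Prop :=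
  i ≤ j ∧ j ≤ n ∧ ∀ r : Fin n, IsPrefix x (ibwtSuffix v r) ↔ (i ≤ r.val ∧ r.val < j)


/-- Under the swap construction (x-interval `[ix..ix+2·nxa)`
splitting into the xa-interval `[ix..ix+nxa)`, all a's in `v`, and the xb-interval
`[ix+nxa..ix+2·nxa)`, all b's in `v`, with equal LCP content, and `v'` swapping the
two blocks), the standard permutation `Ψ_{v'}` agrees with `Ψ_v` at every `i` with
`Ψ_v(i)` outside the x-interval, and otherwise `Ψ_{v'}(i) = Ψ_v(i) ± nxa`, which
still lies in the x-interval. -/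
theorem swap_stdPerm {n : ℕ} (v v' : Fin n → Bool) (x : List Bool) (ix nxa : ℕ)
    (hx : IsXIntervalIBWT v x ix (ix + 2 * nxa))
    (hxa : IsXIntervalIBWT v (x ++ [false]) ix (ix + nxa))
    (hxb : IsXIntervalIBWT v (x ++ [true]) (ix + nxa) (ix + 2 * nxa))
    (hlcp : ∀ t : ℕ, 0 < t → t < nxa →
      ibwtLCP v (ix + t) = ibwtLCP v (ix + nxa + t))
    (hva : ∀ r : Fin n, ix ≤ r.val → r.val < ix + nxa → v r = false)
    (hvb : ∀ r : Fin n, ix + nxa ≤ r.val → r.val < ix + 2 * nxa → v r = true)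
    (hv' : ∀ r : Fin n, v' r =
      if ix ≤ r.val ∧ r.val < ix + nxa then true
      else if ix + nxa ≤ r.val ∧ r.val < ix + 2 * nxa then false
      else v r) :
    ∀ i : Fin n,
      (¬ (ix ≤ (stdPerm v i).val ∧ (stdPerm v i).val < ix + 2 * nxa) →
        stdPerm v' i = stdPerm v i) ∧
      ((ix ≤ (stdPerm v i).val ∧ (stdPerm v i).val < ix + 2 * nxa) →
        ((stdPerm v' i).val = (stdPerm v i).val + nxa ∨
         (stdPerm v' i).val + nxa = (stdPerm v i).val) ∧
        ix ≤ (stdPerm v' i).val ∧ (stdPerm v' i).val < ix + 2 * nxa) := by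
  have hn : ix + 2 * nxa ≤ n := hx.2.1
  -- the block-swap involution on indices
  set t : Fin n → Fin n := fun r =>
    if h1 : ix ≤ r.val ∧ r.val < ix + nxa then ⟨r.val + nxa, by omega⟩
    else if h2 : ix + nxa ≤ r.val ∧ r.val < ix + 2 * nxa then
      ⟨r.val - nxa, by have := r.isLt; omega⟩
    else r with ht
  have tval : ∀ r : Fin n, (t r).val =
      if ix ≤ r.val ∧ r.val < ix + nxa then r.val + nxa
      else if ix + nxa ≤ r.val ∧ r.val < ix + 2 * nxa then r.val - nxa
      else r.val := by
    intro r
    simp only [ht]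
    split_ifs with h1 h2 <;> rfl
  have htinv : Function.Involutive t := by
    intro r
    apply Fin.ext
    have e1 := tval r
    have e2 := tval (t r)
    split_ifs at e1 e2 <;> omega
  set τ : Equiv.Perm (Fin n) := htinv.toPerm with hτ
  have hτval : ∀ r : Fin n, τ r = t r := fun r => rfl
  have hinv2 : ∀ r : Fin n, t (t r) = r := htinv
  -- v' = v ∘ t
  have hv't : ∀ r : Fin n, v' r = v (t r) := by
    intro r
    rw [hv' r]
    by_cases h1 : ix ≤ r.val ∧ r.val < ix + nxa
    · have : (t r).val = r.val + nxa := by rw [tval]; split_ifs <;> omega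
      rw [if_pos h1, hvb (t r) (by omega) (by omega)]
    · by_cases h2 : ix + nxa ≤ r.val ∧ r.val < ix + 2 * nxa
      · have : (t r).val = r.val - nxa := by rw [tval]; split_ifs <;> omega
        rw [if_neg h1, if_pos h2, hva (t r) (by omega) (by omega)]
      · have : t r = r := by apply Fin.ext; rw [tval]; split_ifs <;> omega
        rw [if_neg h1, if_neg h2, this]
  set σ : Equiv.Perm (Fin n) := Tuple.sort v with hσ
  have hstab : ∀ i j, i < j → v (σ i) = v (σ j) → σ i < σ j :=
    (Tuple.eq_sort_iff.mp rfl).2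
  -- key: sort v' = σ.trans τ
  have hsort : Tuple.sort v' = σ.trans τ := by
    symm
    rw [Tuple.eq_sort_iff]
    constructor
    · have : v' ∘ ⇑(σ.trans τ) = v ∘ ⇑σ := by
        funext k
        simp only [Function.comp, Equiv.trans_apply, hτval, hv't, hinv2]
      rw [this]
      exact Tuple.monotone_sort v
    · intro i j hij heq
      simp only [Equiv.trans_apply, hτval, hv't, hinv2] at heq ⊢
      have hσij : σ i < σ j := hstab i j hij heq
      rcases hb : v (σ i) with _ | _
      · -- false: both avoid the b-block
        have hpi : ¬(ix + nxa ≤ (σ i).val ∧ (σ i).val < ix + 2 * nxa) := by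
          intro h; rw [hvb (σ i) h.1 h.2] at hb; exact Bool.noConfusion hb
        have hpj : ¬(ix + nxa ≤ (σ j).val ∧ (σ j).val < ix + 2 * nxa) := by
          intro h; rw [heq, hvb (σ j) h.1 h.2] at hb; exact Bool.noConfusion hb
        have : (t (σ i)).val < (t (σ j)).val := by
          rw [tval, tval]
          have := Fin.lt_iff_val_lt_val.mp hσij
          split_ifs <;> omega
        exact Fin.lt_iff_val_lt_val.mpr this
      · -- true: both avoid the a-block
        have hpi : ¬(ix ≤ (σ i).val ∧ (σ i).val < ix + nxa) := by
          intro h; rw [hva (σ i) h.1 h.2] at hb; exact Bool.noConfusion hb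
        have hpj : ¬(ix ≤ (σ j).val ∧ (σ j).val < ix + nxa) := by
          intro h; rw [heq, hva (σ j) h.1 h.2] at hb; exact Bool.noConfusion hb
        have : (t (σ i)).val < (t (σ j)).val := by
          rw [tval, tval]
          have := Fin.lt_iff_val_lt_val.mp hσij
          split_ifs <;> omega
        exact Fin.lt_iff_val_lt_val.mpr this
  intro i
  have hps : stdPerm v' i = t (stdPerm v i) := by
    show Tuple.sort v' i = _
    rw [hsort]; rfl
  constructor
  · intro hout
    rw [hps]
    apply Fin.ext
    rw [tval]
    split_ifs <;> omega
  · intro hin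
    rw [hps, tval]
    split_ifs with h1 h2 <;> omega

end SILA
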